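/- Let d ≥ 2 be an even integer and Θ a d-small symbol with defining intervals whose middle region has cardinality (k+1)d for some integer k ≥ 0. Then there is a finite sequence of d/2-cohook removals transforming Θ into a symbol Ψ such that Ψ is d-small, Ψ admits defining intervals whose middle region has cardinality kd, and w_ud(Ψ) = w_ud(Θ). -/

import Mathlib

open scoped Classical

/-- A β-set: a set of integers containing all sufficiently small integers
and no sufficiently large ones. -/
def IsBetaSet (X : Set ℤ) : Prop :=
  (∃ c : ℤ, ∀ z : ℤ, z < c → z ∈ X) ∧ (∃ C : ℤ, ∀ z : ℤ, C ≤ z → z ∉ X)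

/-- `topB X = max X`. -/
noncomputable def topB (X : Set ℤ) : ℤ := sSup X

/-- `botB X = max {z | every integer < z lies in X}`. -/
noncomputable def botB (X : Set ℤ) : ℤ := sSup {z : ℤ | ∀ w : ℤ, w < z → w ∈ X}

/-- The charge `s(X)` of a β-set `X`, computed with the cutoff `c = botB X`. -/
noncomputable def chargeB (X : Set ℤ) : ℤ :=
  ((X ∩ Set.Ici (botB X)).ncard : ℤ) + botB X - 1

/-- `elemSeq X j` is the `(j+1)`-st largest element of the β-set `X`. -/
noncomputable def elemSeq (X : Set ℤ) : ℕ → ℤ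
  | 0 => sSup X
  | n + 1 => sSup (X ∩ Set.Iio (elemSeq X n))

/-- The partition `λ(X)` of a β-set `X`, `0`-indexed: `partB X j = λ_{j+1}`,
recovered from `x_j = s(X) + λ_j - j + 1` where `x_j` is the `j`-th largest element. -/
noncomputable def partB (X : Set ℤ) (j : ℕ) : ℕ :=
  (elemSeq X j - chargeB X + j).toNat

/-- The size `|λ(X)|` of the partition of a β-set `X`. -/
noncomputable def sizeB (X : Set ℤ) : ℕ := ∑ᶠ j : ℕ, partB X j

/-- A partition, encoded as a weakly decreasing eventually zero function (0-indexed). -/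
def IsPartition (μ : ℕ → ℕ) : Prop :=
  (∀ j, μ (j + 1) ≤ μ j) ∧ ∃ N, ∀ j, N ≤ j → μ j = 0

/-- The β-set `{s + λ_j - j + 1 : j ≥ 1}` of the partition `μ` with charge `s`. -/
def betaOf (μ : ℕ → ℕ) (s : ℤ) : Set ℤ :=
  {x : ℤ | ∃ j : ℕ, x = s + (μ j : ℤ) - (j : ℤ)}

/-- The symbol `Θ = (X₁, X₂)` is `d`-small with defining intervals
`I₁ = [a₁,b₁]` and `I₂ = [a₂,b₂]`. -/
structure IsDSmallWith (d : ℤ) (X₁ X₂ : Set ℤ) (a₁ b₁ a₂ b₂ : ℤ) : Prop where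
  len₁ : b₁ - a₁ = d / 2 - 1
  len₂ : b₂ - a₂ = d / 2 - 1
  bot₁ : a₁ ≤ botB X₁
  bot₂ : a₂ ≤ botB X₂
  top₁ : topB X₁ ≤ b₁
  top₂ : topB X₂ ≤ b₂
  cong : d ∣ b₂ - (b₁ + d / 2)

/-- The symbol `Θ = (X₁, X₂)` is `d`-small: it admits some pair of defining intervals. -/
def IsDSmall (d : ℤ) (X₁ X₂ : Set ℤ) : Prop :=
  ∃ a₁ b₁ a₂ b₂ : ℤ, IsDSmallWith d X₁ X₂ a₁ b₁ a₂ b₂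

/-- The row (`1` or `2`) containing the right region. -/
def rightRow (b₁ b₂ : ℤ) : ℕ := if b₁ < b₂ then 2 else 1

/-- The row, as a β-set, containing the right region. -/
def rightSet (X₁ X₂ : Set ℤ) (b₁ b₂ : ℤ) : Set ℤ := if b₁ < b₂ then X₂ else X₁

/-- The row, as a β-set, containing the left region. -/
def leftSet (X₁ X₂ : Set ℤ) (b₁ b₂ : ℤ) : Set ℤ := if b₁ < b₂ then X₁ else X₂

/-- The cardinality `kd` of the middle region. -/
def middleLen (d b₁ b₂ : ℤ) : ℤ := |b₂ - b₁| - d / 2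

/-- The alphabet `{∧, ∨, ×, ∘}` of up-down diagrams: `up = ∧`, `dn = ∨`,
`cross = ×`, `circ = ∘`. -/
inductive UD : Type
  | up
  | dn
  | cross
  | circ
deriving DecidableEq

/-- The up-down diagram `w_ud(Θ)` of a `d`-small symbol with defining intervals:
`wud d X₁ X₂ b₁ b₂ i` is the letter `w_i` for `1 ≤ i ≤ d/2`.  Here the right
region is `[m+1, m+d/2]` with `m = max b₁ b₂ - d/2`, `β_i = m + i`, and
`β_i - kd - d/2 = β_i - |b₂ - b₁|`. -/
noncomputable def wud (d : ℤ) (X₁ X₂ : Set ℤ) (b₁ b₂ : ℤ) (i : ℤ) : UD :=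
  if (max b₁ b₂ - d / 2 + i) ∈ rightSet X₁ X₂ b₁ b₂ then
    if (max b₁ b₂ - d / 2 + i) - |b₂ - b₁| ∈ leftSet X₁ X₂ b₁ b₂ then UD.cross else UD.up
  else
    if (max b₁ b₂ - d / 2 + i) - |b₂ - b₁| ∈ leftSet X₁ X₂ b₁ b₂ then UD.dn else UD.circ

/-- Removing an `e`-cohook in row `1` (the rows get interchanged afterwards). -/
def RemoveCohookRow1 (e : ℤ) (Θ Θ' : Set ℤ × Set ℤ) : Prop :=
  ∃ x : ℤ, x ∈ Θ.1 ∧ x - e ∉ Θ.2 ∧ Θ' = (Θ.2 ∪ {x - e}, Θ.1 \ {x})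

/-- Removing an `e`-cohook in row `2` (the rows get interchanged afterwards). -/
def RemoveCohookRow2 (e : ℤ) (Θ Θ' : Set ℤ × Set ℤ) : Prop :=
  ∃ x : ℤ, x ∈ Θ.2 ∧ x - e ∉ Θ.1 ∧ Θ' = (Θ.2 \ {x}, Θ.1 ∪ {x - e})

/-- Removing an `e`-cohook. -/
def RemoveCohook (e : ℤ) (Θ Θ' : Set ℤ × Set ℤ) : Prop :=
  RemoveCohookRow1 e Θ Θ' ∨ RemoveCohookRow2 e Θ Θ'

/-- The symbol `Θ` has an `e`-cohook. -/
def HasCohook (e : ℤ) (Θ : Set ℤ × Set ℤ) : Prop :=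
  (∃ x : ℤ, x ∈ Θ.1 ∧ x - e ∉ Θ.2) ∨ (∃ x : ℤ, x ∈ Θ.2 ∧ x - e ∉ Θ.1)

/-- `C` is an `e`-cocore of `Θ`: a symbol with no `e`-cohooks obtained from `Θ`
by a finite sequence of `e`-cohook removals. -/
def IsCocoreOf (e : ℤ) (Θ C : Set ℤ × Set ℤ) : Prop :=
  Relation.ReflTransGen (RemoveCohook e) Θ C ∧ ¬ HasCohook e C

/-- The `n`-fold composition of a relation. -/
def RelPow {α : Type*} (R : α → α → Prop) : ℕ → α → α → Prop
  | 0 => Eq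
  | n + 1 => fun a c => ∃ b, R a b ∧ RelPow R n b c

/-- `(a, b)` (row `a`, column `b`, both `1`-indexed) is a box of the partition `μ`
(`μ` is `0`-indexed, so `μ (a-1)` is the `a`-th part `λ_a`). -/
def IsBox (μ : ℕ → ℕ) (a b : ℕ) : Prop := 1 ≤ a ∧ 1 ≤ b ∧ b ≤ μ (a - 1)

/-- `(a, b)` is an addable box of `μ`: adjoining it yields a partition. -/
def IsAddableBox (μ : ℕ → ℕ) (a b : ℕ) : Prop :=
  1 ≤ a ∧ b = μ (a - 1) + 1 ∧ (a = 1 ∨ b ≤ μ (a - 2))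

/-- `(a, b)` is a removable box of `μ`: deleting it yields a partition. -/
def IsRemovableBox (μ : ℕ → ℕ) (a b : ℕ) : Prop :=
  1 ≤ a ∧ b = μ (a - 1) ∧ 1 ≤ b ∧ μ a < b

/-- The charged content `t + b - a` of the box in row `a` and column `b`,
with respect to the charge `t`. -/
def chCont (t : ℤ) (a b : ℕ) : ℤ := t + (b : ℤ) - (a : ℤ)

/-- Selecting the component `j ∈ {1, 2}` of a bipartition. -/
def compPart (μ₁ μ₂ : ℕ → ℕ) (j : ℕ) : ℕ → ℕ := if j = 1 then μ₁ else μ₂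

/-- Selecting the component `j ∈ {1, 2}` of a pair of charges. -/
def compT (t₁ t₂ : ℤ) (j : ℕ) : ℤ := if j = 1 then t₁ else t₂

/-- The box `(a, b)` in component `j` is a good removable `i`-box of the
bipartition `(μ₁, μ₂)` with charges `(t₁, t₂)`, where `r` is the row containing
the right region: it is a removable box of charged content `≡ i (mod d)` and
there is no addable box `A` of either component with charged content `≡ i (mod d)`
such that either `A` has strictly larger charged content, or `A` has equal
charged content and lies in component `r`. -/
def IsGoodRemovableBox (d : ℤ) (μ₁ μ₂ : ℕ → ℕ) (t₁ t₂ : ℤ) (r : ℕ) (i : ℤ)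
    (j a b : ℕ) : Prop :=
  (j = 1 ∨ j = 2) ∧ IsRemovableBox (compPart μ₁ μ₂ j) a b ∧
    d ∣ chCont (compT t₁ t₂ j) a b - i ∧
    ∀ j' a' b' : ℕ, (j' = 1 ∨ j' = 2) → IsAddableBox (compPart μ₁ μ₂ j') a' b' →
      d ∣ chCont (compT t₁ t₂ j') a' b' - i →
      ¬ (chCont (compT t₁ t₂ j) a b < chCont (compT t₁ t₂ j') a' b' ∨
        (chCont (compT t₁ t₂ j') a' b' = chCont (compT t₁ t₂ j) a b ∧ j' = r))

/-- The position of a letter in the order `× < ∧ < ∨ < ∘`. -/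
def udIdx : UD → ℕ
  | UD.cross => 0
  | UD.up => 1
  | UD.dn => 2
  | UD.circ => 3

/-- The word `w₁ ⋯ w_{d/2}` reads `×^α ∧^w ∨^h ∘^β`: all `×`'s first, then all
`∧`'s, then all `∨`'s, then all `∘`'s. -/
def SortedUD (d : ℤ) (w : ℤ → UD) : Prop :=
  ∀ i j : ℤ, 1 ≤ i → i ≤ j → j ≤ d / 2 → udIdx (w i) ≤ udIdx (w j)

/-- The number of occurrences of the letter `u` in the word `w₁ ⋯ w_{d/2}`. -/
noncomputable def countUD (d : ℤ) (w : ℤ → UD) (u : UD) : ℕ :=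
  ((Finset.Icc (1 : ℤ) (d / 2)).filter fun i => w i = u).card

/-- `w'` is obtained from `w` by permuting the letters `∧` and `∨` among the
positions carrying `∧` or `∨`, leaving every `×` and `∘` in place. -/
def PermUpDn (d : ℤ) (w w' : ℤ → UD) : Prop :=
  (∀ i : ℤ, 1 ≤ i → i ≤ d / 2 →
    ((w' i = UD.cross ↔ w i = UD.cross) ∧ (w' i = UD.circ ↔ w i = UD.circ))) ∧
  countUD d w' UD.up = countUD d w UD.up

/-- Replace every letter `∧` by `∨`, leaving the other letters unchanged. -/
def replaceUp : UD → UD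
  | UD.up => UD.dn
  | u => u

section Stmt10Aux

private lemma beta_ub' {X : Set ℤ} (hX : IsBetaSet X) {b : ℤ} (h : topB X ≤ b) :
    ∀ x ∈ X, x ≤ b := by
  obtain ⟨C, hC⟩ := hX.2
  have hbdd : BddAbove X := by
    refine ⟨C, fun y hy => ?_⟩
    by_contra hcon
    exact hC y (by omega) hy
  intro x hx
  exact le_trans (le_csSup hbdd hx) h

private lemma beta_ray' {X : Set ℤ} (hX : IsBetaSet X) {a : ℤ} (h : a ≤ botB X) :
    ∀ z : ℤ, z < a → z ∈ X := by
  obtain ⟨c, hc⟩ := hX.1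
  obtain ⟨C, hC⟩ := hX.2
  have hne : {z : ℤ | ∀ w : ℤ, w < z → w ∈ X}.Nonempty := ⟨c, hc⟩
  have hbdd : BddAbove {z : ℤ | ∀ w : ℤ, w < z → w ∈ X} := by
    refine ⟨C + 1, fun z hz => ?_⟩
    by_contra hcon
    push_neg at hcon
    exact hC C le_rfl (hz C (by omega))
  have hmem := Int.csSup_mem hne hbdd
  intro z hz
  exact hmem z (lt_of_lt_of_le hz h)

private lemma le_botB_of {X : Set ℤ} {a b : ℤ} (h1 : ∀ z : ℤ, z < a → z ∈ X)
    (h2 : ∀ x ∈ X, x ≤ b) : a ≤ botB X := by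
  have hbdd : BddAbove {z : ℤ | ∀ w : ℤ, w < z → w ∈ X} := by
    refine ⟨b + 1, fun z hz => ?_⟩
    by_contra hcon
    push_neg at hcon
    have := h2 (b + 1) (hz (b + 1) (by omega))
    omega
  exact le_csSup hbdd h1

private lemma topB_le_of {X : Set ℤ} {a b : ℤ} (h1 : ∀ z : ℤ, z < a → z ∈ X)
    (h2 : ∀ x ∈ X, x ≤ b) : topB X ≤ b :=
  csSup_le ⟨a - 1, h1 (a - 1) (by omega)⟩ h2

private lemma removeCohook_swap {e : ℤ} {Θ Θ' : Set ℤ × Set ℤ} (h : RemoveCohook e Θ Θ') :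
    RemoveCohook e (Θ.2, Θ.1) (Θ'.2, Θ'.1) := by
  rcases h with ⟨x, hx, hxe, rfl⟩ | ⟨x, hx, hxe, rfl⟩
  · exact Or.inr ⟨x, hx, hxe, rfl⟩
  · exact Or.inl ⟨x, hx, hxe, rfl⟩

private lemma rtg_swap {e : ℤ} {A B C D : Set ℤ}
    (h : Relation.ReflTransGen (RemoveCohook e) (A, B) (C, D)) :
    Relation.ReflTransGen (RemoveCohook e) (B, A) (D, C) := by
  have := Relation.ReflTransGen.lift (f := fun p : Set ℤ × Set ℤ => (p.2, p.1))
    (fun a b hab => removeCohook_swap hab) _ _ h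
  simpa using this

private lemma chainL (e : ℤ) (M : Finset ℤ) :
    ∀ A B : Set ℤ, (M : Set ℤ) ⊆ B → (∀ x ∈ M, x - e ∉ A) →
      Relation.ReflTransGen (RemoveCohook e) (A, B)
        (A ∪ (fun x => x - e) '' (M : Set ℤ), B \ (M : Set ℤ)) ∨
      Relation.ReflTransGen (RemoveCohook e) (A, B)
        (B \ (M : Set ℤ), A ∪ (fun x => x - e) '' (M : Set ℤ)) := by
  induction M using Finset.induction_on with
  | empty =>
      intro A B _ _
      left
      simp only [Finset.coe_empty, Set.image_empty, Set.union_empty, Set.diff_empty]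
      exact Relation.ReflTransGen.refl
  | @insert a M ha ih =>
      intro A B hsub hnot
      have haB : a ∈ B := hsub (by simp)
      have haA : a - e ∉ A := hnot a (Finset.mem_insert_self a M)
      have hstep : RemoveCohook e (A, B) (B \ {a}, A ∪ {a - e}) :=
        Or.inr ⟨a, haB, haA, rfl⟩
      have hsub' : (M : Set ℤ) ⊆ B \ {a} := by
        intro x hx
        simp only [Finset.mem_coe] at hx
        refine ⟨hsub (by simp [hx]), ?_⟩
        simp only [Set.mem_singleton_iff]
        rintro rfl
        exact ha hx
      have hnot' : ∀ x ∈ M, x - e ∉ A ∪ {a - e} := by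
        intro x hx hmem
        rcases hmem with hmem | hmem
        · exact hnot x (Finset.mem_insert_of_mem hx) hmem
        · have hxa : x = a := by
            have : x - e = a - e := hmem
            omega
          exact ha (hxa ▸ hx)
      have hE1 : (A ∪ {a - e}) ∪ (fun x => x - e) '' (M : Set ℤ)
          = A ∪ (fun x => x - e) '' ((insert a M : Finset ℤ) : Set ℤ) := by
        ext x
        simp only [Finset.coe_insert, Set.image_insert_eq, Set.mem_union,
          Set.mem_insert_iff, Set.mem_singleton_iff]
        tauto
      have hE2 : (B \ {a}) \ (M : Set ℤ) = B \ ((insert a M : Finset ℤ) : Set ℤ) := by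
        ext x
        simp only [Finset.coe_insert, Set.mem_diff, Set.mem_insert_iff,
          Set.mem_singleton_iff, Finset.mem_coe]
        tauto
      rcases ih (A ∪ {a - e}) (B \ {a}) hsub' hnot' with hch | hch
      · right
        have h2 := rtg_swap hch
        rw [hE1, hE2] at h2
        exact Relation.ReflTransGen.head hstep h2
      · left
        have h2 := rtg_swap hch
        rw [hE1, hE2] at h2
        exact Relation.ReflTransGen.head hstep h2

private lemma wud_eq_iff {d : ℤ} {X₁ X₂ X₁' X₂' : Set ℤ} {b₁ b₂ b₁' b₂' i : ℤ}
    (h1 : ((max b₁' b₂' - d / 2 + i) ∈ rightSet X₁' X₂' b₁' b₂') ↔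
      ((max b₁ b₂ - d / 2 + i) ∈ rightSet X₁ X₂ b₁ b₂))
    (h2 : ((max b₁' b₂' - d / 2 + i) - |b₂' - b₁'| ∈ leftSet X₁' X₂' b₁' b₂') ↔
      ((max b₁ b₂ - d / 2 + i) - |b₂ - b₁| ∈ leftSet X₁ X₂ b₁ b₂)) :
    wud d X₁' X₂' b₁' b₂' i = wud d X₁ X₂ b₁ b₂ i := by
  unfold wud
  exact if_congr h1 (if_congr h2 rfl rfl) (if_congr h2 rfl rfl)

private lemma wud_swap {d : ℤ} {X₁ X₂ : Set ℤ} {b₁ b₂ : ℤ} (h : b₁ ≠ b₂) (i : ℤ) :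
    wud d X₂ X₁ b₂ b₁ i = wud d X₁ X₂ b₁ b₂ i := by
  rcases h.lt_or_gt with h' | h' <;>
    simp [wud, rightSet, leftSet, h', h'.not_gt, max_comm, abs_sub_comm]

private lemma dsmall_swap {d : ℤ} (hdE : Even d) {X₁ X₂ : Set ℤ} {a₁ b₁ a₂ b₂ : ℤ}
    (h : IsDSmallWith d X₁ X₂ a₁ b₁ a₂ b₂) : IsDSmallWith d X₂ X₁ a₂ b₂ a₁ b₁ := by
  obtain ⟨c, hc⟩ := h.cong
  obtain ⟨c2, hc2⟩ := hdE
  refine ⟨h.len₂, h.len₁, h.bot₂, h.bot₁, h.top₂, h.top₁, ⟨-c - 1, ?_⟩⟩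
  have h2 : 2 * (d / 2) = d := by omega
  have h3 : b₁ - (b₂ + d / 2) = -(b₂ - (b₁ + d / 2)) - 2 * (d / 2) := by ring
  rw [h3, hc, h2]
  ring

end Stmt10Aux
private lemma key10 (d : ℤ) (hd : 2 ≤ d) (hdE : Even d)
    (X₁ X₂ : Set ℤ) (hX₁ : IsBetaSet X₁) (hX₂ : IsBetaSet X₂)
    (a₁ b₁ a₂ b₂ : ℤ) (hsm : IsDSmallWith d X₁ X₂ a₁ b₁ a₂ b₂)
    (k : ℕ) (hlt : b₁ < b₂) (hmid : middleLen d b₁ b₂ = ((k : ℤ) + 1) * d) :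
    ∃ Y₁ Y₂ : Set ℤ,
      Relation.ReflTransGen (RemoveCohook (d / 2)) (X₁, X₂) (Y₁, Y₂) ∧
      ∃ a₁' b₁' a₂' b₂' : ℤ, IsDSmallWith d Y₁ Y₂ a₁' b₁' a₂' b₂' ∧
        middleLen d b₁' b₂' = (k : ℤ) * d ∧
        ∀ i : ℤ, 1 ≤ i → i ≤ d / 2 →
          wud d Y₁ Y₂ b₁' b₂' i = wud d X₁ X₂ b₁ b₂ i := by
  obtain ⟨c2, hc2⟩ := hdE
  have hd2 : d / 2 = c2 := by omega
  have hc2pos : 1 ≤ c2 := by omega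
  have hk0 : (0 : ℤ) ≤ (k : ℤ) := Int.natCast_nonneg k
  have hgd : d ≤ ((k : ℤ) + 1) * d := by nlinarith
  have hexp : ((k : ℤ) + 1) * d = (k : ℤ) * d + d := by ring
  have hg' : b₂ - b₁ = ((k : ℤ) + 1) * d + c2 := by
    have h := hmid
    unfold middleLen at h
    rw [abs_of_nonneg (by omega)] at h
    linarith [hd2]
  have ha₁ : b₁ - a₁ = c2 - 1 := by have := hsm.len₁; omega
  have ha₂ : b₂ - a₂ = c2 - 1 := by have := hsm.len₂; omega
  have hub₁ : ∀ x ∈ X₁, x ≤ b₁ := beta_ub' hX₁ hsm.top₁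
  have hub₂ : ∀ x ∈ X₂, x ≤ b₂ := beta_ub' hX₂ hsm.top₂
  have hray₁ : ∀ z : ℤ, z < a₁ → z ∈ X₁ := beta_ray' hX₁ hsm.bot₁
  have hray₂ : ∀ z : ℤ, z < a₂ → z ∈ X₂ := beta_ray' hX₂ hsm.bot₂
  have hgap : b₁ + c2 < a₂ := by linarith [hgd]
  -- the beads to move
  have hMfin : {x : ℤ | x ∈ X₂ ∧ x - c2 ∉ X₁}.Finite := by
    apply (Set.finite_Icc (a₁ + c2) b₂).subset
    rintro x ⟨hx2, hx1⟩
    refine ⟨?_, hub₂ x hx2⟩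
    by_contra hcon
    exact hx1 (hray₁ _ (by omega))
  have hFc : (hMfin.toFinset : Set ℤ) = {x : ℤ | x ∈ X₂ ∧ x - c2 ∉ X₁} :=
    hMfin.coe_toFinset
  have hchain := chainL c2 hMfin.toFinset X₁ X₂
      (by rw [hFc]; exact fun x hx => hx.1)
      (by intro x hx; exact (hMfin.mem_toFinset.mp hx).2)
  have hEq1 : X₁ ∪ (fun x => x - c2) '' (hMfin.toFinset : Set ℤ)
      = {x : ℤ | x + c2 ∈ X₂} := by
    rw [hFc]
    ext x
    simp only [Set.mem_union, Set.mem_image, Set.mem_setOf_eq]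
    constructor
    · rintro (hx | ⟨y, ⟨hy2, hy1⟩, rfl⟩)
      · exact hray₂ _ (by have := hub₁ x hx; omega)
      · simpa using hy2
    · intro hx
      by_cases hx1 : x ∈ X₁
      · exact Or.inl hx1
      · exact Or.inr ⟨x + c2, ⟨hx, by simpa using hx1⟩, by ring⟩
  have hEq2 : X₂ \ (hMfin.toFinset : Set ℤ) = {x : ℤ | x - c2 ∈ X₁} := by
    rw [hFc]
    ext x
    simp only [Set.mem_diff, Set.mem_setOf_eq]
    constructor
    · rintro ⟨hx2, hnd⟩
      by_contra hcon
      exact hnd ⟨hx2, hcon⟩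
    · intro hx1
      have hxb : x - c2 ≤ b₁ := hub₁ _ hx1
      exact ⟨hray₂ _ (by omega), fun h => h.2 hx1⟩
  rw [hEq1, hEq2] at hchain
  -- facts about the two shifted sets
  have hrayP2 : ∀ z : ℤ, z < a₂ - c2 → z ∈ {x : ℤ | x + c2 ∈ X₂} :=
    fun z hz => hray₂ _ (by omega)
  have hubP2 : ∀ x ∈ {x : ℤ | x + c2 ∈ X₂}, x ≤ b₂ - c2 :=
    fun x hx => by have := hub₂ _ hx; omega
  have hrayP1 : ∀ z : ℤ, z < a₁ + c2 → z ∈ {x : ℤ | x - c2 ∈ X₁} :=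
    fun z hz => hray₁ _ (by omega)
  have hubP1 : ∀ x ∈ {x : ℤ | x - c2 ∈ X₁}, x ≤ b₁ + c2 :=
    fun x hx => by have := hub₁ _ hx; omega
  rw [hd2]
  have hmaxO : max b₁ b₂ = b₂ := max_eq_right hlt.le
  have habsO : |b₂ - b₁| = ((k : ℤ) + 1) * d + c2 := by
    rw [abs_of_nonneg (by omega)]; linarith [hg']
  rcases hchain with h | h
  · -- Ψ = (X₂ - c2, X₁ + c2), right region in row 1
    refine ⟨_, _, h, a₂ - c2, b₂ - c2, a₁ + c2, b₁ + c2, ⟨?_, ?_, ?_, ?_, ?_, ?_, ?_⟩, ?_, ?_⟩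
    · omega
    · omega
    · exact le_botB_of hrayP2 hubP2
    · exact le_botB_of hrayP1 hubP1
    · exact topB_le_of hrayP2 hubP2
    · exact topB_le_of hrayP1 hubP1
    · have hx : (b₁ + c2) - ((b₂ - c2) + d / 2) = -(((k : ℤ) + 1) * d) := by
        linarith [hg', hd2]
      rw [hx]
      exact dvd_neg.mpr ⟨(k : ℤ) + 1, by ring⟩
    · unfold middleLen
      rw [abs_of_nonpos (by linarith [hg', hgd])]
      linarith [hg', hd2, hexp]
    · intro i hi1 hi2
      have hmax' : max (b₂ - c2) (b₁ + c2) = b₂ - c2 :=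
        max_eq_left (by linarith [hg', hgd])
      have habs' : |(b₁ + c2) - (b₂ - c2)| = ((k : ℤ) + 1) * d - c2 := by
        rw [abs_of_nonpos (by linarith [hg', hgd])]; linarith [hg']
      apply wud_eq_iff
      · rw [hmax', hmaxO]
        unfold rightSet
        rw [if_neg (not_lt.mpr (by linarith [hg', hgd] : b₁ + c2 ≤ b₂ - c2)), if_pos hlt]
        simp only [Set.mem_setOf_eq]
        rw [show b₂ - c2 - d / 2 + i + c2 = b₂ - d / 2 + i from by ring]
      · rw [hmax', hmaxO, habs', habsO]
        unfold leftSet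
        rw [if_neg (not_lt.mpr (by linarith [hg', hgd] : b₁ + c2 ≤ b₂ - c2)), if_pos hlt]
        simp only [Set.mem_setOf_eq]
        rw [show b₂ - c2 - d / 2 + i - (((k : ℤ) + 1) * d - c2) - c2
            = b₂ - d / 2 + i - (((k : ℤ) + 1) * d + c2) from by ring]
  · -- Ψ = (X₁ + c2, X₂ - c2), right region in row 2
    refine ⟨_, _, h, a₁ + c2, b₁ + c2, a₂ - c2, b₂ - c2, ⟨?_, ?_, ?_, ?_, ?_, ?_, ?_⟩, ?_, ?_⟩
    · omega
    · omega
    · exact le_botB_of hrayP1 hubP1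
    · exact le_botB_of hrayP2 hubP2
    · exact topB_le_of hrayP1 hubP1
    · exact topB_le_of hrayP2 hubP2
    · have hx : (b₂ - c2) - ((b₁ + c2) + d / 2) = (k : ℤ) * d := by
        linarith [hg', hd2, hexp]
      rw [hx]
      exact ⟨(k : ℤ), by ring⟩
    · unfold middleLen
      rw [abs_of_nonneg (by linarith [hg', hgd])]
      linarith [hg', hd2, hexp]
    · intro i hi1 hi2
      have hmax' : max (b₁ + c2) (b₂ - c2) = b₂ - c2 :=
        max_eq_right (by linarith [hg', hgd])
      have habs' : |(b₂ - c2) - (b₁ + c2)| = ((k : ℤ) + 1) * d - c2 := by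
        rw [abs_of_nonneg (by linarith [hg', hgd])]; linarith [hg']
      apply wud_eq_iff
      · rw [hmax', hmaxO]
        unfold rightSet
        rw [if_pos (by linarith [hg', hgd] : b₁ + c2 < b₂ - c2), if_pos hlt]
        simp only [Set.mem_setOf_eq]
        rw [show b₂ - c2 - d / 2 + i + c2 = b₂ - d / 2 + i from by ring]
      · rw [hmax', hmaxO, habs', habsO]
        unfold leftSet
        rw [if_pos (by linarith [hg', hgd] : b₁ + c2 < b₂ - c2), if_pos hlt]
        simp only [Set.mem_setOf_eq]
        rw [show b₂ - c2 - d / 2 + i - (((k : ℤ) + 1) * d - c2) - c2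
            = b₂ - d / 2 + i - (((k : ℤ) + 1) * d + c2) from by ring]
/-- If `Θ = (X₁,X₂)` is `d`-small with defining intervals whose
middle region has cardinality `(k+1)d`, then a finite sequence of `d/2`-cohook
removals transforms `Θ` into a `d`-small symbol `Ψ` admitting defining intervals
whose middle region has cardinality `kd`, with `w_ud(Ψ) = w_ud(Θ)`. -/
theorem stmt10 (d : ℤ) (hd : 2 ≤ d) (hdE : Even d)
    (X₁ X₂ : Set ℤ) (hX₁ : IsBetaSet X₁) (hX₂ : IsBetaSet X₂)
    (a₁ b₁ a₂ b₂ : ℤ) (hsm : IsDSmallWith d X₁ X₂ a₁ b₁ a₂ b₂)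
    (k : ℕ) (hmid : middleLen d b₁ b₂ = ((k : ℤ) + 1) * d) :
    ∃ Y₁ Y₂ : Set ℤ,
      Relation.ReflTransGen (RemoveCohook (d / 2)) (X₁, X₂) (Y₁, Y₂) ∧
      ∃ a₁' b₁' a₂' b₂' : ℤ, IsDSmallWith d Y₁ Y₂ a₁' b₁' a₂' b₂' ∧
        middleLen d b₁' b₂' = (k : ℤ) * d ∧
        ∀ i : ℤ, 1 ≤ i → i ≤ d / 2 →
          wud d Y₁ Y₂ b₁' b₂' i = wud d X₁ X₂ b₁ b₂ i := by
  have hk0 : (0 : ℤ) ≤ (k : ℤ) := Int.natCast_nonneg k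
  have hkd : (0 : ℤ) ≤ (k : ℤ) * d := mul_nonneg hk0 (by omega)
  have hexp : ((k : ℤ) + 1) * d = (k : ℤ) * d + d := by ring
  have hne : b₁ ≠ b₂ := by
    intro hEq
    have h0 : middleLen d b₁ b₂ = -(d / 2) := by
      unfold middleLen
      rw [← hEq, sub_self, abs_zero]
      ring
    have h2 : 1 ≤ d / 2 := by omega
    linarith [hmid, h0, hkd, hexp, h2]
  rcases hne.lt_or_gt with hlt | hlt
  · exact key10 d hd hdE X₁ X₂ hX₁ hX₂ a₁ b₁ a₂ b₂ hsm k hlt hmid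
  · have hmid' : middleLen d b₂ b₁ = ((k : ℤ) + 1) * d := by
      unfold middleLen at hmid ⊢
      rw [abs_sub_comm]
      exact hmid
    obtain ⟨Y₁, Y₂, hch, A₁, B₁, A₂, B₂, hsmY, hmidY, hwudY⟩ :=
      key10 d hd hdE X₂ X₁ hX₂ hX₁ a₂ b₂ a₁ b₁ (dsmall_swap hdE hsm) k hlt hmid'
    have hKB : B₁ ≠ B₂ := by
      intro hEq
      have h0 : middleLen d B₁ B₂ = -(d / 2) := by
        unfold middleLen
        rw [← hEq, sub_self, abs_zero]
        ring
      have h2 : 1 ≤ d / 2 := by omega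
      linarith [hmidY, h0, hkd, h2]
    refine ⟨Y₂, Y₁, rtg_swap hch, A₂, B₂, A₁, B₁, dsmall_swap hdE hsmY, ?_, ?_⟩
    · unfold middleLen at hmidY ⊢
      rw [abs_sub_comm]
      exact hmidY
    · intro i hi1 hi2
      calc wud d Y₂ Y₁ B₂ B₁ i = wud d Y₁ Y₂ B₁ B₂ i := wud_swap hKB i
        _ = wud d X₂ X₁ b₂ b₁ i := hwudY i hi1 hi2
        _ = wud d X₁ X₂ b₁ b₂ i := wud_swap hne i
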